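/- (Topological energy bound) Let ω be a smooth function on a compact Riemannian 3-manifold (M,g) satisfying (Δ_g + 1)ω = -c_ω B, where ∫_M B vol_g = B₀ is the topological charge. Then the energy E = ∫_M (⅛|dφ|² + ¼V(φ) + ½|dω|² + ½ω²) vol_g satisfies E ≥ B₀² c_ω² / (2|M|). -/

import Mathlib

open MeasureTheory

/-- Topological energy bound: if (Δ_g + 1)ω = -c_ω B with ∫ B = B₀ and ∫ Δω = 0,
and E = ∫ (⅛|dφ|² + ¼V(φ) + ½|dω|² + ½ω²), then E ≥ B₀²c_ω²/(2|M|). -/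
theorem topological_energy_bound {M : Type*} [MeasurableSpace M] (μ : Measure M)
    [IsFiniteMeasure μ] (hμ : μ Set.univ ≠ 0)
    (cω B₀ : ℝ) (hc : cω ≠ 0)
    (ω B Δω dφsq Vφ dωsq : M → ℝ)
    (hdφ : ∀ x, 0 ≤ dφsq x) (hV : ∀ x, 0 ≤ Vφ x) (hdω : ∀ x, 0 ≤ dωsq x)
    (hconstraint : ∀ x, Δω x + ω x = -cω * B x)
    (hdiv : ∫ x, Δω x ∂μ = 0)
    (hΔint : Integrable Δω μ) (hωL2 : MemLp ω 2 μ) (hBint : Integrable B μ)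
    (hcharge : ∫ x, B x ∂μ = B₀)
    (hEint : Integrable (fun x => dφsq x / 8 + Vφ x / 4 + dωsq x / 2 + (ω x)^2 / 2) μ)
    (E : ℝ)
    (hE : E = ∫ x, (dφsq x / 8 + Vφ x / 4 + dωsq x / 2 + (ω x)^2 / 2) ∂μ) :
    E ≥ B₀^2 * cω^2 / (2 * (μ Set.univ).toReal) := by
  set V : ℝ := (μ Set.univ).toReal with hV'
  have hVpos : 0 < V := ENNReal.toReal_pos hμ (measure_ne_top μ _)
  -- integrability facts
  have hωint : Integrable ω μ := by
    have : ω = fun x => (-cω * B x) - Δω x := by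
      funext x; linarith [hconstraint x]
    rw [this]
    exact ((hBint.const_mul (-cω)).sub hΔint)
  have hωsq : Integrable (fun x => (ω x)^2) μ := by
    have := hωL2.integrable_sq
    simpa [pow_two] using this
  -- ∫ ω = -cω * B₀
  have hIω : ∫ x, ω x ∂μ = -cω * B₀ := by
    have : ∫ x, ω x ∂μ = ∫ x, ((-cω * B x) - Δω x) ∂μ := by
      congr 1; funext x; linarith [hconstraint x]
    rw [this, integral_sub ((hBint.const_mul (-cω))) hΔint, hdiv,
      integral_const_mul, hcharge]
    ring
  set m : ℝ := (-cω * B₀) / V with hm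
  -- variance nonneg: ∫ (ω - m)^2 ≥ 0
  have hvar : 0 ≤ ∫ x, (ω x - m)^2 ∂μ :=
    integral_nonneg fun x => sq_nonneg _
  have hexp : ∫ x, (ω x - m)^2 ∂μ
      = (∫ x, (ω x)^2 ∂μ) - 2 * m * (-cω * B₀) + m^2 * V := by
    have h1 : Integrable (fun x => (ω x)^2 - 2 * m * ω x) μ :=
      hωsq.sub ((hωint.const_mul (2 * m)))
    have : (fun x => (ω x - m)^2) = fun x => ((ω x)^2 - 2 * m * ω x) + m^2 := by
      funext x; ring
    rw [this, integral_add h1 (integrable_const _), integral_sub hωsq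
      ((hωint.const_mul (2 * m))), integral_const_mul, hIω, integral_const, smul_eq_mul]
    rw [hV', measureReal_def]; ring
  have hω2 : (cω * B₀)^2 / V ≤ ∫ x, (ω x)^2 ∂μ := by
    have : m^2 * V = (cω * B₀)^2 / V := by
      rw [hm]; field_simp
    rw [hexp, hm] at hvar
    have h2 : 2 * ((-cω * B₀) / V) * (-cω * B₀) = 2 * (cω * B₀)^2 / V := by
      field_simp
    rw [h2, this] at hvar
    have key : 2 * (cω * B₀)^2 / V = (cω * B₀)^2 / V + (cω * B₀)^2 / V := by
      rw [← add_div]; ring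
    linarith
  -- E ≥ ∫ ω²/2
  have hElow : ∫ x, (ω x)^2 / 2 ∂μ ≤ E := by
    rw [hE]
    apply integral_mono (hωsq.div_const 2) hEint
    intro x
    have := hdφ x; have := hV x; have := hdω x
    simp only
    linarith
  have h3 : ∫ x, (ω x)^2 / 2 ∂μ = (∫ x, (ω x)^2 ∂μ) / 2 := by
    simp [integral_div]
  rw [ge_iff_le]
  have : B₀^2 * cω^2 / (2 * V) = ((cω * B₀)^2 / V) / 2 := by ring
  rw [this]
  linarith [hω2, hElow, h3 ▸ hElow]
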